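/- Assume φ ∈ F is nonzero and ρ ∈ ℤⁿ is nonzero. Then the vertical-type derivation D_{e,ρ,φ} and the simple horizontal-type derivation E_{ẽ,s,d,u} commute on B (i.e. D_{e,ρ,φ}∘E_{ẽ,s,d,u} = E_{ẽ,s,d,u}∘D_{e,ρ,φ}) if and only if ⟨ẽ,ρ⟩ = 0 and t·φ′ + v₀(e)·φ = 0 in F, where v₀(e) = ⟨e,u⟩/d; the second condition is equivalent to saying that v₀(e) is an integer and φ = c·t^{−v₀(e)} for some c ∈ K∖{0}. -/

import Mathlib

noncomputable section

/-- standard pairing `⟨m,v⟩ = Σᵢ mᵢ vᵢ` on `ℤⁿ`. -/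
def pairZ {n : ℕ} (m v : Fin n → ℤ) : ℤ := ∑ i, m i * v i

/-- derivative `f ↦ df/dt` of a rational function `f ∈ K(t)`. -/
def rderiv {K : Type*} [Field K] (φ : RatFunc K) : RatFunc K :=
  (algebraMap (Polynomial K) (RatFunc K) (Polynomial.derivative φ.num)
      * algebraMap (Polynomial K) (RatFunc K) φ.denom
    - algebraMap (Polynomial K) (RatFunc K) φ.num
      * algebraMap (Polynomial K) (RatFunc K) (Polynomial.derivative φ.denom))
    / (algebraMap (Polynomial K) (RatFunc K) φ.denom) ^ 2

/-- Vertical-type derivation `D_{e,ρ,φ}` on the group algebra `B = K(t)[ℤⁿ]`,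
determined by `f·χ^m ↦ ⟨m,ρ⟩·φ·f·χ^{m+e}`. -/
def Dvert {K : Type*} [Field K] {n : ℕ} (e ρ : Fin n → ℤ) (φ : RatFunc K)
    (b : (Fin n → ℤ) →₀ RatFunc K) : (Fin n → ℤ) →₀ RatFunc K :=
  b.sum fun m f => Finsupp.single (m + e) ((pairZ m ρ : RatFunc K) * φ * f)

/-- Simple horizontal-type derivation `E_{e',s,d,u}` on `B = K(t)[ℤⁿ]`,
determined by `f·χ^m ↦ t^s·(⟨m,u⟩·f + d·t·f′)·χ^{m+e'}`. -/
def Ehor {K : Type*} [Field K] {n : ℕ} (e' : Fin n → ℤ) (s : ℤ) (d : ℤ)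
    (u : Fin n → ℤ) (b : (Fin n → ℤ) →₀ RatFunc K) : (Fin n → ℤ) →₀ RatFunc K :=
  b.sum fun m f => Finsupp.single (m + e')
    ((RatFunc.X : RatFunc K) ^ s
      * ((pairZ m u : RatFunc K) * f + (d : RatFunc K) * RatFunc.X * rderiv f))

/-
On a monomial `f χ^m` the commutator `[D, E]` is the single term of degree `m + e + e'` with
coefficient `t^s (⟨e',ρ⟩ φ (⟨m,u⟩ f + d t f') - ⟨m,ρ⟩ f (⟨e,u⟩ φ + d t φ'))`, so commuting is a
condition on these coefficients alone. It holds for all `m, f` iff `⟨e',ρ⟩ = 0` and `φ` solves the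
Euler equation `t φ' = -v₀(e) φ`. Writing `φ = a / b` in lowest terms, the Euler equation gives
`a ∣ t a'` and `b ∣ t b'`; in characteristic zero a polynomial dividing `t p'` is a monomial, so
`φ` is a Laurent monomial `c t^k`, and then `v₀(e) = -k`.
-/

open Polynomial

theorem Polynomial.coeff_X_mul_derivative {R : Type*} [Semiring R] (p : R[X]) (i : ℕ) :
    (X * derivative p).coeff i = i * p.coeff i := by
  cases i with
  | zero => simp
  | succ i => rw [coeff_X_mul, coeff_derivative, Nat.cast_comm]; push_cast; rfl

theorem Polynomial.eq_C_mul_X_pow_of_dvd_X_mul_derivative {R : Type*} [CommRing R] [IsDomain R]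
    [CharZero R] {p : R[X]} (h : p ∣ X * derivative p) :
    p = C p.leadingCoeff * X ^ p.natDegree := by
  rcases eq_or_ne p 0 with rfl | hp
  · simp
  set j := p.natDegree
  -- `X * p' - j * p` is divisible by `p` but its coefficient of degree `j` cancels
  have hcoeff : ∀ i, (X * derivative p - C (j : R) * p).coeff i = (i - j) * p.coeff i := by
    intro i
    rw [coeff_sub, coeff_X_mul_derivative, coeff_C_mul]
    ring
  have hzero : X * derivative p - C (j : R) * p = 0 := by
    refine eq_zero_of_dvd_of_degree_lt (dvd_sub h (dvd_mul_left p _)) ?_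
    rw [degree_eq_natDegree hp, degree_lt_iff_coeff_zero]
    intro i hi
    rw [hcoeff]
    rcases hi.lt_or_eq with hlt | rfl
    · rw [coeff_eq_zero_of_natDegree_lt (by exact_mod_cast hlt), mul_zero]
    · rw [sub_self, zero_mul]
  ext i
  have hi := hcoeff i
  rw [hzero, coeff_zero, eq_comm, mul_eq_zero, sub_eq_zero, Nat.cast_inj] at hi
  rw [coeff_C_mul_X_pow]
  split_ifs with hij
  · rw [hij]; rfl
  · exact hi.resolve_left hij

section RationalDerivative

variable {K : Type*} [Field K]

local notation "ι" => algebraMap K[X] (RatFunc K)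

theorem rderiv_div_algebraMap (p q : K[X]) (hq : q ≠ 0) :
    rderiv (ι p / ι q) = (ι (derivative p) * ι q - ι p * ι (derivative q)) / ι q ^ 2 := by
  set φ := ι p / ι q
  have hq' : ι q ≠ 0 := RatFunc.algebraMap_ne_zero hq
  have hb' : ι φ.denom ≠ 0 := RatFunc.algebraMap_ne_zero φ.denom_ne_zero
  have cross : φ.num * q = p * φ.denom := by
    apply RatFunc.algebraMap_injective K
    rw [map_mul, map_mul, ← div_eq_div_iff hb' hq', RatFunc.num_div_denom]
  have key : (derivative φ.num * φ.denom - φ.num * derivative φ.denom) * q ^ 2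
      = (derivative p * q - p * derivative q) * φ.denom ^ 2 := by
    have dcross := congrArg derivative cross
    simp only [derivative_mul] at dcross
    linear_combination (φ.denom * q) * dcross
      - (derivative φ.denom * q + derivative q * φ.denom) * cross
  rw [rderiv, div_eq_div_iff (pow_ne_zero 2 hb') (pow_ne_zero 2 hq')]
  simpa using congrArg ι key

theorem rderiv_algebraMap (p : K[X]) : rderiv (ι p) = ι (derivative p) := by
  simpa using rderiv_div_algebraMap p 1 one_ne_zero

theorem rderiv_add (f g : RatFunc K) : rderiv (f + g) = rderiv f + rderiv g := by
  induction f using RatFunc.induction_on with | f a b hb =>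
  induction g using RatFunc.induction_on with | f c e he =>
  have hb' : ι b ≠ 0 := RatFunc.algebraMap_ne_zero hb
  have he' : ι e ≠ 0 := RatFunc.algebraMap_ne_zero he
  have hsum : ι a / ι b + ι c / ι e = ι (a * e + c * b) / ι (b * e) := by
    simp only [map_add, map_mul]
    field_simp
  rw [hsum, rderiv_div_algebraMap _ _ (mul_ne_zero hb he), rderiv_div_algebraMap _ _ hb,
    rderiv_div_algebraMap _ _ he]
  simp only [derivative_mul, map_add, map_mul]
  field_simp
  ring

theorem rderiv_mul (f g : RatFunc K) : rderiv (f * g) = rderiv f * g + f * rderiv g := by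
  induction f using RatFunc.induction_on with | f a b hb =>
  induction g using RatFunc.induction_on with | f c e he =>
  have hb' : ι b ≠ 0 := RatFunc.algebraMap_ne_zero hb
  have he' : ι e ≠ 0 := RatFunc.algebraMap_ne_zero he
  have hprod : ι a / ι b * (ι c / ι e) = ι (a * c) / ι (b * e) := by
    rw [map_mul, map_mul, div_mul_div_comm]
  rw [hprod, rderiv_div_algebraMap _ _ (mul_ne_zero hb he), rderiv_div_algebraMap _ _ hb,
    rderiv_div_algebraMap _ _ he]
  simp only [derivative_mul, map_add, map_mul]
  field_simp
  ring

theorem rderiv_C (c : K) : rderiv (RatFunc.C c) = 0 := by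
  simpa [RatFunc.algebraMap_C] using rderiv_algebraMap (Polynomial.C c)

theorem rderiv_X : rderiv (RatFunc.X : RatFunc K) = 1 := by
  simpa using rderiv_algebraMap (Polynomial.X : K[X])

variable (K) in
def rderivDerivation : Derivation K (RatFunc K) (RatFunc K) where
  toFun := rderiv
  map_add' := rderiv_add
  map_smul' c f := by
    rw [RingHom.id_apply, Algebra.smul_def, Algebra.smul_def, rderiv_mul, RatFunc.algebraMap_eq_C,
      rderiv_C, zero_mul, zero_add]
  map_one_eq_zero' := by simpa using rderiv_C (1 : K)
  leibniz' f g := by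
    simp only [LinearMap.coe_mk, AddHom.coe_mk, rderiv_mul, smul_eq_mul]
    ring

@[simp]
theorem rderivDerivation_apply (f : RatFunc K) : rderivDerivation K f = rderiv f := rfl

theorem rderiv_zero : rderiv (0 : RatFunc K) = 0 :=
  (rderivDerivation K).map_zero

theorem rderiv_one : rderiv (1 : RatFunc K) = 0 :=
  (rderivDerivation K).map_one_eq_zero

theorem rderiv_intCast (z : ℤ) : rderiv (z : RatFunc K) = 0 :=
  (rderivDerivation K).map_intCast z

theorem X_mul_rderiv_C_mul_X_zpow (c : K) (z : ℤ) :
    RatFunc.X * rderiv (RatFunc.C c * RatFunc.X ^ z)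
      = (z : RatFunc K) * (RatFunc.C c * RatFunc.X ^ z) := by
  have hX : (RatFunc.X : RatFunc K) ≠ 0 := RatFunc.X_ne_zero
  rw [rderiv_mul, rderiv_C, ← rderivDerivation_apply, Derivation.leibniz_zpow,
    rderivDerivation_apply, rderiv_X, zpow_sub_one₀ hX]
  simp only [zsmul_eq_mul, smul_eq_mul]
  field_simp
  ring

end RationalDerivative

section EulerOperator

variable {K : Type*} [Field K] [CharZero K]

local notation "ι" => algebraMap K[X] (RatFunc K)

theorem exists_eq_C_mul_X_zpow_of_X_mul_rderiv_eq {φ : RatFunc K} (hφ : φ ≠ 0) {l : K}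
    (h : RatFunc.X * rderiv φ = RatFunc.C l * φ) :
    ∃ k : ℤ, l = k ∧ ∃ c : K, c ≠ 0 ∧ φ = RatFunc.C c * RatFunc.X ^ k := by
  have hb : ι φ.denom ≠ 0 := RatFunc.algebraMap_ne_zero φ.denom_ne_zero
  have hpoly : X * derivative φ.num * φ.denom - φ.num * (X * derivative φ.denom)
      = C l * φ.num * φ.denom := by
    apply RatFunc.algebraMap_injective K
    rw [← RatFunc.num_div_denom φ, rderiv_div_algebraMap _ _ φ.denom_ne_zero] at h
    field_simp at h
    simp only [map_sub, map_mul, RatFunc.algebraMap_C, RatFunc.algebraMap_X]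
    linear_combination h
  have hcop : IsCoprime φ.num φ.denom := RatFunc.isCoprime_num_denom φ
  have ha_dvd : φ.num ∣ X * derivative φ.num := hcop.dvd_of_dvd_mul_right
    ⟨X * derivative φ.denom + C l * φ.denom, by linear_combination hpoly⟩
  have hb_dvd : φ.denom ∣ X * derivative φ.denom := hcop.symm.dvd_of_dvd_mul_right
    ⟨X * derivative φ.num - C l * φ.num, by linear_combination -hpoly⟩
  have hmono : φ = RatFunc.C (φ.num.leadingCoeff / φ.denom.leadingCoeff)
      * RatFunc.X ^ ((φ.num.natDegree : ℤ) - φ.denom.natDegree) := by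
    conv_lhs => rw [← RatFunc.num_div_denom φ, eq_C_mul_X_pow_of_dvd_X_mul_derivative ha_dvd,
      eq_C_mul_X_pow_of_dvd_X_mul_derivative hb_dvd]
    simp only [map_mul, map_pow, map_div₀, RatFunc.algebraMap_C, RatFunc.algebraMap_X,
      zpow_sub₀ (RatFunc.X_ne_zero (K := K)), zpow_natCast]
    field_simp
  refine ⟨φ.num.natDegree - φ.denom.natDegree, ?_, _, ?_, hmono⟩
  · rw [hmono, X_mul_rderiv_C_mul_X_zpow, ← hmono] at h
    have := mul_right_cancel₀ hφ h
    exact RatFunc.C_injective (by simpa using this.symm)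
  · exact div_ne_zero (leadingCoeff_ne_zero.2 (RatFunc.num_ne_zero hφ))
      (leadingCoeff_ne_zero.2 φ.denom_ne_zero)

theorem X_mul_rderiv_add_div_mul_eq_zero_iff {φ : RatFunc K} (hφ : φ ≠ 0) (w : ℤ) {d : ℤ}
    (hd : d ≠ 0) :
    RatFunc.X * rderiv φ + ((w : RatFunc K) / (d : RatFunc K)) * φ = 0 ↔
      ∃ k : ℤ, w = d * k ∧ ∃ c : K, c ≠ 0 ∧ φ = RatFunc.C c * RatFunc.X ^ (-k) := by
  have hdK : (d : K) ≠ 0 := Int.cast_ne_zero.2 hd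
  have hwd : ((w : RatFunc K) / d) = RatFunc.C ((w : K) / d) := by simp
  constructor
  · intro h
    obtain ⟨k, hk, c, hc, rfl⟩ := exists_eq_C_mul_X_zpow_of_X_mul_rderiv_eq hφ
      (l := -((w : K) / d)) (by rw [map_neg, ← hwd]; linear_combination h)
    refine ⟨-k, ?_, c, hc, by rw [neg_neg]⟩
    field_simp at hk
    exact_mod_cast (by push_cast; linear_combination -hk : (w : K) = d * (-k : ℤ))
  · rintro ⟨k, rfl, c, -, rfl⟩
    rw [X_mul_rderiv_C_mul_X_zpow]
    push_cast
    field_simp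
    ring

end EulerOperator

section Pairing

variable {n : ℕ}

theorem pairZ_add_left (m m' v : Fin n → ℤ) : pairZ (m + m') v = pairZ m v + pairZ m' v :=
  add_dotProduct m m' v

theorem pairZ_zero_left (v : Fin n → ℤ) : pairZ 0 v = 0 :=
  zero_dotProduct v

theorem pairZ_self_ne_zero {v : Fin n → ℤ} (hv : v ≠ 0) : pairZ v v ≠ 0 :=
  dotProduct_self_eq_zero.not.2 hv

end Pairing

section Derivations

variable {K : Type*} [Field K] {n : ℕ} (e ρ : Fin n → ℤ) (φ : RatFunc K) (e' : Fin n → ℤ) (s d : ℤ)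
  (u : Fin n → ℤ)

theorem Dvert_single (m : Fin n → ℤ) (f : RatFunc K) :
    Dvert e ρ φ (Finsupp.single m f) = Finsupp.single (m + e) ((pairZ m ρ : RatFunc K) * φ * f) :=
  Finsupp.sum_single_index (by rw [mul_zero, Finsupp.single_zero])

theorem Ehor_single (m : Fin n → ℤ) (f : RatFunc K) :
    Ehor e' s d u (Finsupp.single m f) = Finsupp.single (m + e')
      (RatFunc.X ^ s * ((pairZ m u : RatFunc K) * f + (d : RatFunc K) * RatFunc.X * rderiv f)) :=
  Finsupp.sum_single_index (by simp [rderiv_zero])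

theorem Dvert_add (b₁ b₂ : (Fin n → ℤ) →₀ RatFunc K) :
    Dvert e ρ φ (b₁ + b₂) = Dvert e ρ φ b₁ + Dvert e ρ φ b₂ :=
  Finsupp.sum_add_index' (fun _ => by rw [mul_zero, Finsupp.single_zero])
    (fun _ _ _ => by rw [mul_add, Finsupp.single_add])

theorem Ehor_add (b₁ b₂ : (Fin n → ℤ) →₀ RatFunc K) :
    Ehor e' s d u (b₁ + b₂) = Ehor e' s d u b₁ + Ehor e' s d u b₂ :=
  Finsupp.sum_add_index' (fun _ => by simp [rderiv_zero])
    (fun _ _ _ => by rw [rderiv_add, ← Finsupp.single_add]; ring_nf)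

theorem Dvert_Ehor_comm_iff_forall_single :
    (∀ b, Dvert e ρ φ (Ehor e' s d u b) = Ehor e' s d u (Dvert e ρ φ b)) ↔
      ∀ m f, Dvert e ρ φ (Ehor e' s d u (Finsupp.single m f))
        = Ehor e' s d u (Dvert e ρ φ (Finsupp.single m f)) := by
  refine ⟨fun h m f => h _, fun h b => ?_⟩
  induction b using Finsupp.induction_linear with
  | zero => simp [Dvert, Ehor]
  | add b₁ b₂ h₁ h₂ => rw [Ehor_add, Dvert_add, h₁, h₂, Dvert_add, Ehor_add]
  | single m f => exact h m f

theorem Dvert_Ehor_single_eq_iff (m : Fin n → ℤ) (f : RatFunc K) :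
    Dvert e ρ φ (Ehor e' s d u (Finsupp.single m f))
        = Ehor e' s d u (Dvert e ρ φ (Finsupp.single m f)) ↔
      (pairZ e' ρ : RatFunc K) * φ
          * ((pairZ m u : RatFunc K) * f + (d : RatFunc K) * RatFunc.X * rderiv f)
        = (pairZ m ρ : RatFunc K) * f
          * ((pairZ e u : RatFunc K) * φ + (d : RatFunc K) * RatFunc.X * rderiv φ) := by
  have hXs : (RatFunc.X : RatFunc K) ^ s ≠ 0 := zpow_ne_zero s RatFunc.X_ne_zero
  rw [Ehor_single, Dvert_single, Dvert_single, Ehor_single, add_right_comm,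
    (Finsupp.single_injective _).eq_iff, rderiv_mul, rderiv_mul, rderiv_intCast, pairZ_add_left,
    pairZ_add_left, Int.cast_add, Int.cast_add]
  constructor
  · intro h
    exact mul_left_cancel₀ hXs (by linear_combination h)
  · intro h
    linear_combination RatFunc.X ^ s * h

end Derivations

theorem vertical_horizontal_commute_iff_general
    {K : Type*} [Field K] [CharZero K] {n : ℕ}
    (e ρ : Fin n → ℤ) (φ : RatFunc K) (e' : Fin n → ℤ) (s : ℤ) (d : ℤ)
    (hd : 0 < d) (u : Fin n → ℤ) (hφ : φ ≠ 0) (hρ : ρ ≠ 0) :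
    ((∀ b : (Fin n → ℤ) →₀ RatFunc K,
        Dvert e ρ φ (Ehor e' s d u b) = Ehor e' s d u (Dvert e ρ φ b))
      ↔ pairZ e' ρ = 0 ∧
          RatFunc.X * rderiv φ
            + ((pairZ e u : RatFunc K) / (d : RatFunc K)) * φ = 0)
    ∧ ((RatFunc.X * rderiv φ
          + ((pairZ e u : RatFunc K) / (d : RatFunc K)) * φ = 0)
        ↔ ∃ k : ℤ, pairZ e u = d * k ∧
            ∃ c : K, c ≠ 0 ∧ φ = RatFunc.C c * (RatFunc.X : RatFunc K) ^ (-k)) := by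
  refine ⟨?_, X_mul_rderiv_add_div_mul_eq_zero_iff hφ _ hd.ne'⟩
  have hd' : (d : RatFunc K) ≠ 0 := Int.cast_ne_zero.2 hd.ne'
  have euler_iff : RatFunc.X * rderiv φ + ((pairZ e u : RatFunc K) / (d : RatFunc K)) * φ = 0 ↔
      (pairZ e u : RatFunc K) * φ + (d : RatFunc K) * RatFunc.X * rderiv φ = 0 := by
    constructor <;> intro h <;> field_simp at h ⊢ <;> linear_combination h
  simp only [Dvert_Ehor_comm_iff_forall_single, Dvert_Ehor_single_eq_iff, euler_iff]
  constructor
  · intro h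
    -- on `t χ⁰` only the `⟨e',ρ⟩` term survives, and then on `χ^ρ` only the Euler term
    have he' : pairZ e' ρ = 0 := by
      simpa [pairZ_zero_left, rderiv_X, hφ, hd', RatFunc.X_ne_zero] using h 0 RatFunc.X
    refine ⟨he', ?_⟩
    simpa [he', rderiv_one, pairZ_self_ne_zero hρ] using h ρ 1
  · rintro ⟨he', heuler⟩ m f
    rw [he', heuler, Int.cast_zero, zero_mul, zero_mul, mul_zero]

theorem vertical_horizontal_commute_iff
    {K : Type*} [Field K] [IsAlgClosed K] [CharZero K] {n : ℕ} (hn : 1 ≤ n)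
    (e ρ : Fin n → ℤ) (φ : RatFunc K) (e' : Fin n → ℤ) (s : ℤ) (d : ℤ)
    (hd : 0 < d) (u : Fin n → ℤ) (hφ : φ ≠ 0) (hρ : ρ ≠ 0) :
    ((∀ b : (Fin n → ℤ) →₀ RatFunc K,
        Dvert e ρ φ (Ehor e' s d u b) = Ehor e' s d u (Dvert e ρ φ b))
      ↔ pairZ e' ρ = 0 ∧
          RatFunc.X * rderiv φ
            + ((pairZ e u : RatFunc K) / (d : RatFunc K)) * φ = 0)
    ∧ ((RatFunc.X * rderiv φ
          + ((pairZ e u : RatFunc K) / (d : RatFunc K)) * φ = 0)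
        ↔ ∃ k : ℤ, pairZ e u = d * k ∧
            ∃ c : K, c ≠ 0 ∧ φ = RatFunc.C c * (RatFunc.X : RatFunc K) ^ (-k)) :=
  vertical_horizontal_commute_iff_general e ρ φ e' s d hd u hφ hρ
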